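/- (Weighted Brezis–Lieb identity.) Let (Ω, μ) be a measure space, let 1 ≤ p < ∞, and let K : Ω → ℝ be a bounded measurable function. Let (u_k) be a sequence of measurable functions with sup_k ∫_Ω |u_k|^p dμ < ∞, and suppose u_k → u μ-almost everywhere, where u ∈ L^p(μ). Then ∫_Ω K|u_k|^p dμ − ∫_Ω K|u_k − u|^p dμ → ∫_Ω K|u|^p dμ as k → ∞. -/

import Mathlib

open MeasureTheory Filter Topology ENNReal

lemma rpow_abs_sub_le (p : ℝ) (hp : 1 ≤ p) (a b : ℝ) :
    |a - b| ^ p ≤ 2 ^ p * (|a| ^ p + |b| ^ p) := by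
  have hp0 : (0:ℝ) ≤ p := by linarith
  have h1 : |a - b| ≤ 2 * max |a| |b| := by
    calc |a - b| ≤ |a| + |b| := abs_sub a b
    _ ≤ max |a| |b| + max |a| |b| := add_le_add (le_max_left _ _) (le_max_right _ _)
    _ = 2 * max |a| |b| := (two_mul _).symm
  calc |a - b| ^ p ≤ (2 * max |a| |b|) ^ p :=
        Real.rpow_le_rpow (abs_nonneg _) h1 hp0
    _ = 2 ^ p * (max |a| |b|) ^ p := Real.mul_rpow (by norm_num) (le_max_of_le_left (abs_nonneg _))
    _ ≤ 2 ^ p * (|a| ^ p + |b| ^ p) := by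
        apply mul_le_mul_of_nonneg_left _ (Real.rpow_nonneg (by norm_num) p)
        rcases max_cases |a| |b| with ⟨h, _⟩ | ⟨h, _⟩ <;> rw [h]
        · exact le_add_of_nonneg_right (Real.rpow_nonneg (abs_nonneg _) p)
        · exact le_add_of_nonneg_left (Real.rpow_nonneg (abs_nonneg _) p)

lemma exists_delta (p : ℝ) {ε : ℝ} (hε : 0 < ε) :
    ∃ δ : ℝ, 0 < δ ∧ ∀ t : ℝ, |t - 1| ≤ δ → |t ^ p - 1| ≤ ε := by
  have hc : ContinuousAt (fun t : ℝ => t ^ p) 1 :=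
    Real.continuousAt_rpow_const 1 p (Or.inl one_ne_zero)
  rw [Metric.continuousAt_iff] at hc
  obtain ⟨δ, hδ0, hδ⟩ := hc ε hε
  refine ⟨δ / 2, by linarith, fun t ht => ?_⟩
  have := hδ (show dist t 1 < δ by rw [Real.dist_eq]; linarith)
  rw [Real.dist_eq, Real.one_rpow] at this
  linarith

lemma lemA (p : ℝ) (hp : 1 ≤ p) {ε : ℝ} (hε : 0 < ε) :
    ∃ C : ℝ, 0 ≤ C ∧
      ∀ a b : ℝ, abs (|a + b| ^ p - |a| ^ p - |b| ^ p) ≤ ε * |a| ^ p + C * |b| ^ p := by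
  have hp0 : (0:ℝ) < p := by linarith
  obtain ⟨δ, hδ0, hδ⟩ := exists_delta p hε
  refine ⟨(1 + 1 / δ) ^ p + (1 / δ) ^ p + 1, by positivity, fun a b => ?_⟩
  set C := (1 + 1 / δ) ^ p + (1 / δ) ^ p + 1 with hC
  have hbp : (0:ℝ) ≤ |b| ^ p := Real.rpow_nonneg (abs_nonneg _) p
  have hap : (0:ℝ) ≤ |a| ^ p := Real.rpow_nonneg (abs_nonneg _) p
  rcases le_or_gt |b| (δ * |a|) with hcase | hcase
  · rcases eq_or_ne a 0 with rfl | ha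
    · have hb : b = 0 := by
        have : |b| ≤ 0 := by simpa using hcase
        exact abs_eq_zero.1 (le_antisymm this (abs_nonneg _))
      subst hb
      simp [Real.zero_rpow hp0.ne']
    · have hA : 0 < |a| := abs_pos.2 ha
      set t : ℝ := |a + b| / |a| with htdef
      have ht1 : |t - 1| ≤ δ := by
        have h1 : t - 1 = (|a + b| - |a|) / |a| := by
          rw [htdef]; field_simp
        rw [h1, abs_div, abs_of_pos hA, div_le_iff₀ hA]
        calc abs (|a + b| - |a|) ≤ |a + b - a| := abs_abs_sub_abs_le_abs_sub _ _
          _ = |b| := by ring_nf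
          _ ≤ δ * |a| := hcase
      have ht := hδ t ht1
      have hsplit : |a + b| ^ p = t ^ p * |a| ^ p := by
        rw [htdef, Real.div_rpow (abs_nonneg _) (abs_nonneg _),
          div_mul_cancel₀ _ (Real.rpow_pos_of_pos hA p).ne']
      have key : abs (|a + b| ^ p - |a| ^ p) ≤ ε * |a| ^ p := by
        rw [hsplit, show t ^ p * |a| ^ p - |a| ^ p = (t ^ p - 1) * |a| ^ p by ring,
          abs_mul, abs_of_nonneg hap]
        exact mul_le_mul_of_nonneg_right ht hap
      have h2 : abs (|a + b| ^ p - |a| ^ p - |b| ^ p) ≤ abs (|a + b| ^ p - |a| ^ p) + |b| ^ p := by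
        calc _ ≤ abs (|a + b| ^ p - |a| ^ p) + abs (|b| ^ p) := abs_sub _ _
          _ = _ := by rw [abs_of_nonneg hbp]
      have hC1 : (1:ℝ) ≤ C := by
        have : (0:ℝ) ≤ (1 + 1 / δ) ^ p + (1 / δ) ^ p := by positivity
        rw [hC]; linarith
      nlinarith [key, h2]
  · have hb0 : 0 < |b| := lt_of_le_of_lt (mul_nonneg hδ0.le (abs_nonneg _)) hcase
    have ha' : |a| ≤ 1 / δ * |b| := by
      rw [div_mul_eq_mul_div, le_div_iff₀ hδ0, one_mul, mul_comm]
      exact hcase.le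
    have h1 : |a| ^ p ≤ (1 / δ) ^ p * |b| ^ p := by
      calc |a| ^ p ≤ (1 / δ * |b|) ^ p := Real.rpow_le_rpow (abs_nonneg _) ha' hp0.le
        _ = (1 / δ) ^ p * |b| ^ p := Real.mul_rpow (by positivity) (abs_nonneg _)
    have h2 : |a + b| ^ p ≤ (1 + 1 / δ) ^ p * |b| ^ p := by
      have : |a + b| ≤ (1 + 1 / δ) * |b| := by
        calc |a + b| ≤ |a| + |b| := abs_add_le _ _
          _ ≤ 1 / δ * |b| + |b| := add_le_add_left ha' _
          _ = (1 + 1 / δ) * |b| := by ring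
      calc |a + b| ^ p ≤ ((1 + 1 / δ) * |b|) ^ p :=
            Real.rpow_le_rpow (abs_nonneg _) this hp0.le
        _ = _ := Real.mul_rpow (by positivity) (abs_nonneg _)
    have habp : (0:ℝ) ≤ |a + b| ^ p := Real.rpow_nonneg (abs_nonneg _) p
    have h3 : abs (|a + b| ^ p - |a| ^ p - |b| ^ p) ≤ |a + b| ^ p + |a| ^ p + |b| ^ p := by
      rw [abs_le]; constructor <;> nlinarith
    have : |a + b| ^ p + |a| ^ p + |b| ^ p ≤ C * |b| ^ p := by
      rw [hC]; nlinarith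
    nlinarith [mul_nonneg hε.le hap]

noncomputable section

/-- weighted Brezis–Lieb identity. -/
theorem statement11 {α : Type*} [MeasurableSpace α] (μ : Measure α)
    (p : ℝ) (hp : 1 ≤ p)
    (K : α → ℝ) (hKmeas : Measurable K) (hKbdd : ∃ C : ℝ, ∀ᵐ x ∂μ, |K x| ≤ C)
    (u : ℕ → α → ℝ) (u₀ : α → ℝ)
    (humeas : ∀ k, AEMeasurable (u k) μ) (hu₀meas : AEMeasurable u₀ μ)
    (hbdd : ∃ C : ℝ≥0∞, C ≠ ⊤ ∧ ∀ k, (∫⁻ x, ENNReal.ofReal (|u k x| ^ p) ∂μ) ≤ C)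
    (hu₀mem : (∫⁻ x, ENNReal.ofReal (|u₀ x| ^ p) ∂μ) ≠ ⊤)
    (hae : ∀ᵐ x ∂μ, Tendsto (fun k => u k x) atTop (𝓝 (u₀ x))) :
    Tendsto (fun k =>
        (∫ x, K x * |u k x| ^ p ∂μ) - ∫ x, K x * |u k x - u₀ x| ^ p ∂μ)
      atTop (𝓝 (∫ x, K x * |u₀ x| ^ p ∂μ)) := by
  have hp0 : (0:ℝ) < p := by linarith
  obtain ⟨Cb, hCbT, hCb⟩ := hbdd
  obtain ⟨CK₀, hCK₀⟩ := hKbdd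
  set CK := max CK₀ 0 with hCKdef
  have hCK : ∀ᵐ x ∂μ, |K x| ≤ CK := hCK₀.mono fun x h => h.trans (le_max_left _ _)
  have hCK0 : (0:ℝ) ≤ CK := le_max_right _ _
  have hrc : Continuous (fun y : ℝ => |y| ^ p) :=
    (Real.continuous_rpow_const hp0.le).comp continuous_abs
  -- measurability
  have hmeas : ∀ k, AEMeasurable (fun x => |u k x| ^ p) μ := fun k =>
    hrc.measurable.comp_aemeasurable (humeas k)
  have hmeas₀ : AEMeasurable (fun x => |u₀ x| ^ p) μ :=
    hrc.measurable.comp_aemeasurable hu₀meas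
  have hmeasv : ∀ k, AEMeasurable (fun x => |u k x - u₀ x| ^ p) μ := fun k =>
    hrc.measurable.comp_aemeasurable ((humeas k).sub hu₀meas)
  have hnn : ∀ y : ℝ, (0:ℝ) ≤ |y| ^ p := fun y => Real.rpow_nonneg (abs_nonneg _) p
  -- integrability
  have hint : ∀ k, Integrable (fun x => |u k x| ^ p) μ := fun k =>
    ⟨(hmeas k).aestronglyMeasurable,
      (hasFiniteIntegral_iff_ofReal (Eventually.of_forall fun x => hnn _)).2
        ((hCb k).trans_lt hCbT.lt_top)⟩
  have hint₀ : Integrable (fun x => |u₀ x| ^ p) μ :=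
    ⟨hmeas₀.aestronglyMeasurable,
      (hasFiniteIntegral_iff_ofReal (Eventually.of_forall fun x => hnn _)).2
        hu₀mem.lt_top⟩
  have hintv : ∀ k, Integrable (fun x => |u k x - u₀ x| ^ p) μ := fun k =>
    (((hint k).add hint₀).const_mul (2 ^ p)).mono' (hmeasv k).aestronglyMeasurable
      (Eventually.of_forall fun x => by
        rw [Real.norm_eq_abs, abs_of_nonneg (hnn _)]
        exact rpow_abs_sub_le p hp (u k x) (u₀ x))
  -- the difference functions and their integrability
  set D : ℕ → α → ℝ := fun k x => |u k x| ^ p - |u k x - u₀ x| ^ p - |u₀ x| ^ p with hD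
  have hDint : ∀ k, Integrable (fun x => |D k x|) μ := fun k =>
    (((hint k).sub (hintv k)).sub hint₀).abs
  have hDmeas : ∀ k, AEMeasurable (fun x => |D k x|) μ := fun k =>
    continuous_abs.measurable.comp_aemeasurable (((hmeas k).sub (hmeasv k)).sub hmeas₀)
  -- uniform bound on ∫ |u k - u₀|^p
  have hIk : ∀ k, ∫ x, |u k x| ^ p ∂μ ≤ Cb.toReal := by
    intro k
    rw [integral_eq_lintegral_of_nonneg_ae (Eventually.of_forall fun x => hnn _)
      (hmeas k).aestronglyMeasurable]
    exact ENNReal.toReal_mono hCbT (hCb k)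
  set M : ℝ := 2 ^ p * (Cb.toReal + ∫ x, |u₀ x| ^ p ∂μ) with hM
  have hM0 : (0:ℝ) ≤ M :=
    mul_nonneg (Real.rpow_nonneg (by norm_num) p)
      (add_nonneg ENNReal.toReal_nonneg (integral_nonneg fun x => hnn _))
  have hMk : ∀ k, ∫ x, |u k x - u₀ x| ^ p ∂μ ≤ M := by
    intro k
    calc ∫ x, |u k x - u₀ x| ^ p ∂μ
        ≤ ∫ x, 2 ^ p * (|u k x| ^ p + |u₀ x| ^ p) ∂μ :=
          integral_mono (hintv k) (((hint k).add hint₀).const_mul _)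
            (fun x => rpow_abs_sub_le p hp (u k x) (u₀ x))
      _ = 2 ^ p * ((∫ x, |u k x| ^ p ∂μ) + ∫ x, |u₀ x| ^ p ∂μ) := by
          rw [integral_const_mul, integral_add (hint k) hint₀]
      _ ≤ M := by
          rw [hM]
          exact mul_le_mul_of_nonneg_left
            (add_le_add_left (hIk k) _) (Real.rpow_nonneg (by norm_num) p)
  -- key Brezis–Lieb convergence
  have key : Tendsto (fun k => ∫ x, |D k x| ∂μ) atTop (𝓝 0) := by
    rw [Metric.tendsto_atTop]
    intro ε hε
    have hM1 : (0:ℝ) < M + 1 := by linarith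
    set ε' : ℝ := ε / (2 * (M + 1)) with hε'def
    have hε'0 : 0 < ε' := div_pos hε (by linarith)
    obtain ⟨C, hC0, hCineq⟩ := lemA p hp hε'0
    set φ : ℕ → α → ℝ := fun k x => max (|D k x| - ε' * |u k x - u₀ x| ^ p) 0 with hφ
    have hφ0 : ∀ k x, 0 ≤ φ k x := fun k x => le_max_right _ _
    have hφle : ∀ k x, φ k x ≤ C * |u₀ x| ^ p := by
      intro k x
      apply max_le _ (mul_nonneg hC0 (hnn _))
      have h := hCineq (u k x - u₀ x) (u₀ x)
      rw [sub_add_cancel] at h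
      have habs : |D k x| ≤ ε' * |u k x - u₀ x| ^ p + C * |u₀ x| ^ p := by
        rw [hD]
        calc |(|u k x| ^ p - |u k x - u₀ x| ^ p - |u₀ x| ^ p)|
            = abs (|u k x| ^ p - |u k x - u₀ x| ^ p - |u₀ x| ^ p) := rfl
          _ ≤ _ := h
      linarith
    have hφmeas : ∀ k, AEStronglyMeasurable (φ k) μ := fun k =>
      (((hDmeas k).sub ((hmeasv k).const_mul ε')).max aemeasurable_const).aestronglyMeasurable
    have hφint : ∀ k, Integrable (φ k) μ := fun k =>
      (hint₀.const_mul C).mono' (hφmeas k)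
        (Eventually.of_forall fun x => by
          rw [Real.norm_eq_abs, abs_of_nonneg (hφ0 k x)]; exact hφle k x)
    have hφtend : Tendsto (fun k => ∫ x, φ k x ∂μ) atTop (𝓝 0) := by
      have h := tendsto_integral_of_dominated_convergence (fun x => C * |u₀ x| ^ p)
        hφmeas (hint₀.const_mul C)
        (fun k => Eventually.of_forall fun x => by
          rw [Real.norm_eq_abs, abs_of_nonneg (hφ0 k x)]; exact hφle k x)
        (f := fun _ => (0:ℝ)) ?_
      · simpa using h
      · filter_upwards [hae] with x hx
        have h1 : Tendsto (fun k => |u k x| ^ p) atTop (𝓝 (|u₀ x| ^ p)) :=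
          (hrc.tendsto _).comp hx
        have h0 : Tendsto (fun k => u k x - u₀ x) atTop (𝓝 0) := by
          simpa using hx.sub (tendsto_const_nhds (x := u₀ x))
        have h2 : Tendsto (fun k => |u k x - u₀ x| ^ p) atTop (𝓝 0) := by
          have := (hrc.tendsto 0).comp h0
          simpa [Function.comp_def, Real.zero_rpow hp0.ne'] using this
        have h3 : Tendsto (fun k => |D k x| - ε' * |u k x - u₀ x| ^ p) atTop
            (𝓝 (abs (|u₀ x| ^ p - 0 - |u₀ x| ^ p) - ε' * 0)) :=
          (((h1.sub h2).sub tendsto_const_nhds).abs).sub (h2.const_mul ε')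
        have h4 := h3.max (tendsto_const_nhds (x := (0:ℝ)))
        simpa using h4
    rw [Metric.tendsto_atTop] at hφtend
    obtain ⟨N, hN⟩ := hφtend (ε / 2) (by linarith)
    refine ⟨N, fun k hk => ?_⟩
    have hφk := hN k hk
    rw [Real.dist_eq, sub_zero,
      abs_of_nonneg (integral_nonneg (fun x => hφ0 k x))] at hφk
    rw [Real.dist_eq, sub_zero,
      abs_of_nonneg (integral_nonneg fun x => abs_nonneg _)]
    have step : ∫ x, |D k x| ∂μ ≤ (∫ x, φ k x ∂μ) + ε' * ∫ x, |u k x - u₀ x| ^ p ∂μ := by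
      have h := integral_mono (f := fun x => |D k x|)
        (g := fun x => φ k x + ε' * |u k x - u₀ x| ^ p) (hDint k)
        ((hφint k).add ((hintv k).const_mul ε'))
        (fun x => by
          have := le_max_left (|D k x| - ε' * |u k x - u₀ x| ^ p) 0
          simp only [hφ]
          linarith)
      rwa [integral_add (hφint k) ((hintv k).const_mul ε'), integral_const_mul] at h
    have hεM : ε' * ∫ x, |u k x - u₀ x| ^ p ∂μ ≤ ε / 2 := by
      have h1 : ε' * ∫ x, |u k x - u₀ x| ^ p ∂μ ≤ ε' * (M + 1) :=
        mul_le_mul_of_nonneg_left ((hMk k).trans (by linarith)) hε'0.le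
      have h2 : ε' * (M + 1) = ε / 2 := by
        rw [hε'def]; field_simp
      linarith
    linarith
  -- conclusion
  have hKint : ∀ f : α → ℝ, Integrable f μ → Integrable (fun x => K x * f x) μ := fun f hf =>
    hf.bdd_mul hKmeas.aestronglyMeasurable
      (hCK.mono fun x h => by rwa [Real.norm_eq_abs])
  rw [tendsto_iff_norm_sub_tendsto_zero]
  have htend : Tendsto (fun k => CK * ∫ x, |D k x| ∂μ) atTop (𝓝 0) := by
    simpa using key.const_mul CK
  apply squeeze_zero (fun k => norm_nonneg _) _ htend
  intro k
  rw [Real.norm_eq_abs]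
  have e1 : ∫ x, K x * D k x ∂μ = (∫ x, K x * |u k x| ^ p ∂μ)
      - (∫ x, K x * |u k x - u₀ x| ^ p ∂μ) - (∫ x, K x * |u₀ x| ^ p ∂μ) := by
    have i1 := hKint _ (hint k)
    have i2 := hKint _ (hintv k)
    have i3 := hKint _ hint₀
    rw [show (fun x => K x * D k x)
        = fun x => (K x * |u k x| ^ p - K x * |u k x - u₀ x| ^ p) - K x * |u₀ x| ^ p by
      funext x; simp only [hD]; ring]
    have i12 : Integrable (fun x => K x * |u k x| ^ p - K x * |u k x - u₀ x| ^ p) μ :=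
      i1.sub i2
    rw [integral_sub i12 i3, integral_sub i1 i2]
  rw [← e1]
  calc |∫ x, K x * D k x ∂μ| ≤ ∫ x, |K x| * |D k x| ∂μ := by
        simpa [Real.norm_eq_abs, abs_mul] using
          norm_integral_le_integral_norm (μ := μ) (fun x => K x * D k x)
    _ ≤ ∫ x, CK * |D k x| ∂μ :=
        integral_mono_of_nonneg
          (Eventually.of_forall fun x => mul_nonneg (abs_nonneg _) (abs_nonneg _))
          ((hDint k).const_mul CK)
          (hCK.mono fun x h => mul_le_mul_of_nonneg_right h (abs_nonneg _))
    _ = CK * ∫ x, |D k x| ∂μ := integral_const_mul _ _
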